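/- arXiv:2604.17127 — 8 statements merged into one kernel-verified Lean document; each statement's English description precedes it below -/
import Mathlib

section
/- Let r1, r2 > 0 with r1 > r2 ≥ 1 and r1 > 1. Then every eigenvalue (over ℂ) of the real 2×2 matrix M = ((0, -r1), (1, -r2)) has modulus strictly greater than 1. -/
/-- If `r1 > r2 ≥ 1` (so in particular `r1 > 1`), then every complex eigenvalue
of the real matrix `M = ((0,-r1),(1,-r2))` has modulus strictly greater than `1`. -/
theorem eigenvalues_modulus_gt_one (r1 r2 : ℝ) (hr2 : 1 ≤ r2) (hr12 : r2 < r1) :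
    ∀ z : ℂ, ((!![(0 : ℝ), -r1; 1, -r2]).map (Complex.ofReal ·)).charpoly.IsRoot z →
      1 < ‖z‖ := by
  intro z hz
  have hcp : ((!![(0 : ℝ), -r1; 1, -r2]).map (Complex.ofReal ·)).charpoly
      = Polynomial.X^2 + Polynomial.C ((r2 : ℂ)) * Polynomial.X + Polynomial.C ((r1 : ℂ)) := by
    rw [Matrix.charpoly, Matrix.det_fin_two]
    simp [Matrix.charmatrix_apply]
    ring
  rw [hcp] at hz
  have heq : z^2 + (r2 : ℂ) * z + (r1 : ℂ) = 0 := by simpa [Polynomial.IsRoot] using hz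
  set x := z.re with hx
  set y := z.im with hy
  have hre : x^2 - y^2 + r2 * x + r1 = 0 := by
    have := congrArg Complex.re heq
    simp [pow_two, Complex.add_re, Complex.mul_re, Complex.ofReal_re, Complex.ofReal_im] at this
    linarith [this]
  have him : y * (2*x + r2) = 0 := by
    have := congrArg Complex.im heq
    simp [pow_two, Complex.add_im, Complex.mul_im, Complex.ofReal_re, Complex.ofReal_im] at this
    linarith [this]
  have habs : ‖z‖^2 = x^2 + y^2 := by
    rw [Complex.sq_norm, Complex.normSq_apply]; ring
  have hgoal : 1 < x^2 + y^2 := by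
    rcases mul_eq_zero.1 him with h0 | h0
    · -- y = 0, real root
      rw [h0] at hre ⊢
      rcases le_or_gt (-1) x with h | h
      · exfalso
        nlinarith [sq_nonneg x, mul_nonneg (show (0:ℝ) ≤ x + 1 by linarith) (show (0:ℝ) ≤ r2 by linarith)]
      · nlinarith
    · have hx2 : x = -r2/2 := by linarith
      nlinarith
  nlinarith [norm_nonneg z]
end

section
/- Let r1, r2 > 1 with r2 < r1 (Region 3, workers ordered fastest to slowest), and set θ = r1(r2-1)/(r1·r2 - 1) and φ = r2(r1-1)/(r1·r2-1). Then 0 < θ < 1, 0 < φ < 1, and r2·(1-θ) = φ and r1·(1-φ) = θ. -/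
/-- For `r1, r2 > 1` with `r2 < r1`, setting `θ = r1(r2-1)/(r1r2-1)` and
`φ = r2(r1-1)/(r1r2-1)`, we have `0 < θ < 1`, `0 < φ < 1`, and the algebraic identities
`r2·(1-θ) = φ` and `r1·(1-φ) = θ` hold. -/
theorem theta_phi_identities (r1 r2 : ℝ) (hr1 : 1 < r1) (hr2 : 1 < r2) (hr21 : r2 < r1)
    (θ φ : ℝ) (hθ : θ = r1 * (r2 - 1) / (r1 * r2 - 1)) (hφ : φ = r2 * (r1 - 1) / (r1 * r2 - 1)) :
    0 < θ ∧ θ < 1 ∧ 0 < φ ∧ φ < 1 ∧ r2 * (1 - θ) = φ ∧ r1 * (1 - φ) = θ := by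
  have hd : 0 < r1 * r2 - 1 := by nlinarith
  have hd' : r1 * r2 - 1 ≠ 0 := ne_of_gt hd
  subst hθ hφ
  refine ⟨div_pos (by nlinarith) hd, ?_, div_pos (by nlinarith) hd, ?_, ?_, ?_⟩
  · rw [div_lt_one hd]; nlinarith
  · rw [div_lt_one hd]; nlinarith
  · rw [eq_div_iff hd', mul_assoc, one_sub_mul, div_mul_cancel₀ _ hd']; ring
  · field_simp; ring_nf
end

section
/- With the same piecewise reset map f as above and r1 > r2 ≥ 1, the points (0,1), (0,0), and (1,1) form a 3-cycle: f(0,1) = (0,0), f(0,0) = (1,1) (since 1 ≤ min(r2, r1)), and f(1,1) = (0,1); that is, (1,1) ↦ (0,1) ↦ (0,0) ↦ (1,1). -/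
open Classical in
/-- The piecewise reset map of a three-worker bucket brigade with constant normalized
velocities `r1 = v1/v3` and `r2 = v2/v3`. -/
noncomputable def resetMap (r1 r2 : ℝ) : ℝ × ℝ → ℝ × ℝ := fun p =>
  if 1 ≤ min (p.1 + (1 - p.2) * r2) ((1 - p.2) * r1) then (1, 1)
  else if (1 - p.2) * r1 < 1 ∧ 1 ≤ p.1 + (1 - p.2) * r2 then (r1 * (1 - p.2), 1)
  else if p.1 + (1 - p.2) * r2 < min 1 ((1 - p.2) * r1) then
    (p.1 + (1 - p.2) * r2, p.1 + (1 - p.2) * r2)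
  else (r1 * (1 - p.2), p.1 + r2 * (1 - p.2))

/-- For `r1 > r2 ≥ 1`, the points `(1,1)`, `(0,1)`, `(0,0)` form a 3-cycle of
the reset map: `f(1,1) = (0,1)`, `f(0,1) = (0,0)`, and `f(0,0) = (1,1)`. -/
theorem standard_three_cycle (r1 r2 : ℝ) (hr2 : 1 ≤ r2) (hr21 : r2 < r1) :
    resetMap r1 r2 (1, 1) = (0, 1) ∧
    resetMap r1 r2 (0, 1) = (0, 0) ∧
    resetMap r1 r2 (0, 0) = (1, 1) := by
  have hr1 : 1 ≤ r1 := hr2.trans hr21.le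
  refine ⟨?_, ?_, ?_⟩ <;> simp [resetMap] <;> norm_num <;>
    simp [le_min_iff, hr1, hr2]
end

section
/- Let M be a real n×n matrix all of whose complex eigenvalues have modulus strictly greater than 1, and let g(v) = M·v + b be an affine map with fixed point p. If v ≠ p, then the sequence of iterates gᵏ(v) is unbounded. -/
/-!
Put `w = v - p`, so that `g^[k] v = p + M ^ k *ᵥ w`. Over `ℂ` the matrix `A` of `M` has its whole
spectrum outside the closed unit disc, hence is invertible and `A⁻¹` has spectral radius `< 1`;
by Gelfand's formula `‖A⁻¹ ^ k‖ → 0`. If the orbit were bounded by `C`, then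
`‖w‖ = ‖A⁻¹ ^ k *ᵥ (A ^ k *ᵥ w)‖ ≤ ‖A⁻¹ ^ k‖ * C → 0`, contradicting `v ≠ p`.
-/

open Filter Topology Set Bornology
open scoped Matrix

theorem Matrix.iterate_affine_eq_pow_mulVec_sub_add {ι R : Type*} [Fintype ι] [DecidableEq ι]
    [Ring R] {M : Matrix ι ι R} {b p : ι → R} {g : (ι → R) → ι → R}
    (hg : ∀ v, g v = M *ᵥ v + b) (hp : g p = p) (v : ι → R) (k : ℕ) :
    g^[k] v = (M ^ k) *ᵥ (v - p) + p := by
  induction k with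
  | zero => simp
  | succ k ih =>
    have hfix : M *ᵥ p + b = p := (hg p).symm.trans hp
    rw [Function.iterate_succ_apply', ih, hg, Matrix.mulVec_add, Matrix.mulVec_mulVec, add_assoc,
      hfix, ← pow_succ']

theorem Matrix.map_pow_mulVec_comp {ι R S : Type*} [Fintype ι] [DecidableEq ι] [Semiring R]
    [Semiring S] (f : R →+* S) (M : Matrix ι ι R) (w : ι → R) (k : ℕ) :
    (M.map f ^ k) *ᵥ (f ∘ w) = f ∘ ((M ^ k) *ᵥ w) := by
  funext i
  rw [Function.comp_apply, RingHom.map_mulVec]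
  congr
  exact (map_pow f.mapMatrix M k).symm

namespace spectrum

variable {A : Type*} [NormedRing A] [NormedAlgebra ℂ A] [CompleteSpace A]

theorem tendsto_norm_pow_atTop_nhds_zero_of_spectralRadius_lt_one {a : A}
    (ha : spectralRadius ℂ a < 1) : Tendsto (fun k : ℕ => ‖a ^ k‖) atTop (𝓝 0) := by
  obtain ⟨r, hρr, hr1⟩ := ENNReal.lt_iff_exists_nnreal_btwn.mp ha
  have hr1 : (r : ℝ) < 1 := by exact_mod_cast hr1
  have hgeometric : ∀ᶠ k : ℕ in atTop, ‖a ^ k‖ ≤ r ^ k := by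
    filter_upwards [(pow_norm_pow_one_div_tendsto_nhds_spectralRadius a).eventually_lt_const hρr,
      eventually_gt_atTop 0] with k hk hk0
    rw [ENNReal.ofReal_lt_iff_lt_toReal (by positivity) ENNReal.coe_ne_top, ENNReal.coe_toReal,
      one_div, Real.rpow_inv_lt_iff_of_pos (norm_nonneg _) r.coe_nonneg (by positivity),
      Real.rpow_natCast] at hk
    exact hk.le
  exact squeeze_zero' (.of_forall fun k => norm_nonneg _) hgeometric
    (tendsto_pow_atTop_nhds_zero_of_lt_one r.coe_nonneg hr1)

theorem spectralRadius_inv_lt_one {u : Aˣ} (hu : ∀ z ∈ spectrum ℂ (u : A), 1 < ‖z‖) :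
    spectralRadius ℂ (↑u⁻¹ : A) < 1 := by
  have hlt : ∀ z ∈ spectrum ℂ (↑u⁻¹ : A), ‖z‖₊ < 1 := by
    intro z hz
    have hz0 : z ≠ 0 := by
      rintro rfl
      exact (zero_mem_iff ℂ).mp hz u⁻¹.isUnit
    have hzinv : z⁻¹ ∈ spectrum ℂ (u : A) := by
      simpa using (inv_mem_iff (r := Units.mk0 z hz0) (a := u⁻¹)).mp hz
    have := hu _ hzinv
    rw [norm_inv, one_lt_inv₀ (norm_pos_iff.mpr hz0)] at this
    exact_mod_cast this
  rcases (spectrum ℂ (↑u⁻¹ : A)).eq_empty_or_nonempty with hempty | hne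
  · simp [spectralRadius, hempty]
  · simpa using spectralRadius_lt_of_forall_lt_of_nonempty hne hlt

end spectrum

section

attribute [local instance] Matrix.linftyOpNormedRing Matrix.linftyOpNormedAlgebra

theorem Matrix.not_isBounded_range_pow_mulVec {ι : Type*} [Fintype ι] [DecidableEq ι]
    {A : Matrix ι ι ℂ} (hA : ∀ z ∈ spectrum ℂ A, 1 < ‖z‖) {w : ι → ℂ} (hw : w ≠ 0) :
    ¬ IsBounded (range fun k : ℕ => (A ^ k) *ᵥ w) := by
  have : CompleteSpace (Matrix ι ι ℂ) := FiniteDimensional.complete ℂ _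
  have h0 : (0 : ℂ) ∉ spectrum ℂ A := fun h0 => absurd (hA 0 h0) (by norm_num)
  obtain ⟨u, rfl⟩ := spectrum.isUnit_of_zero_notMem ℂ h0
  have hdecay := spectrum.tendsto_norm_pow_atTop_nhds_zero_of_spectralRadius_lt_one
    (spectrum.spectralRadius_inv_lt_one hA)
  intro hbdd
  obtain ⟨C, hC⟩ := isBounded_iff_forall_norm_le.mp hbdd
  have hw_le (k : ℕ) : ‖w‖ ≤ ‖(↑u⁻¹ : Matrix ι ι ℂ) ^ k‖ * C := calc
    ‖w‖ = ‖((↑u⁻¹ : Matrix ι ι ℂ) ^ k) *ᵥ ((u : Matrix ι ι ℂ) ^ k *ᵥ w)‖ := by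
      rw [mulVec_mulVec, ← Units.val_pow_eq_pow_val, ← Units.val_pow_eq_pow_val, ← Units.val_mul,
        inv_pow, inv_mul_cancel, Units.val_one, one_mulVec]
    _ ≤ ‖(↑u⁻¹ : Matrix ι ι ℂ) ^ k‖ * ‖(u : Matrix ι ι ℂ) ^ k *ᵥ w‖ := linfty_opNorm_mulVec _ _
    _ ≤ ‖(↑u⁻¹ : Matrix ι ι ℂ) ^ k‖ * C := by gcongr; exact hC _ ⟨k, rfl⟩
  have hw0 : ‖w‖ ≤ 0 := ge_of_tendsto' (by simpa using hdecay.mul_const C) hw_le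
  exact hw (norm_le_zero_iff.mp hw0)

end

/-- If all complex eigenvalues of a real `n×n` matrix `M` have modulus strictly
greater than `1`, and `g(v) = M·v + b` is an affine map with fixed point `p`, then for any
`v ≠ p` the sequence of iterates `gᵏ(v)` is unbounded. -/
theorem expanding_affine_unbounded_orbit (n : ℕ) (M : Matrix (Fin n) (Fin n) ℝ)
    (hM : ∀ z : ℂ, (M.map (Complex.ofReal ·)).charpoly.IsRoot z → 1 < ‖z‖)
    (b : Fin n → ℝ) (g : (Fin n → ℝ) → (Fin n → ℝ))
    (hg : ∀ v, g v = M.mulVec v + b)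
    (p : Fin n → ℝ) (hp : g p = p)
    (v : Fin n → ℝ) (hv : v ≠ p) :
    ¬ Bornology.IsBounded (Set.range fun k : ℕ => g^[k] v) := by
  intro hbdd
  let complexify : (Fin n → ℝ) → Fin n → ℂ := (Complex.ofRealHom ∘ ·)
  have hcomplexify : Isometry complexify := Isometry.piMap _ fun _ => Complex.isometry_ofReal
  have hspec : ∀ z ∈ spectrum ℂ (M.map Complex.ofRealHom), 1 < ‖z‖ :=
    fun z hz => hM z (Matrix.mem_spectrum_iff_isRoot_charpoly.mp hz)
  have hw : complexify (v - p) ≠ 0 := by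
    simpa [complexify, funext_iff, sub_eq_zero] using hv
  refine Matrix.not_isBounded_range_pow_mulVec hspec hw ?_
  have horbit : (fun k : ℕ => (M.map Complex.ofRealHom ^ k) *ᵥ complexify (v - p)) =
      (complexify ∘ (IsometryEquiv.subRight p)) ∘ fun k => g^[k] v := by
    funext k
    rw [Function.comp_apply, Function.comp_apply, IsometryEquiv.subRight_apply,
      Matrix.iterate_affine_eq_pow_mulVec_sub_add hg hp, add_sub_cancel_right]
    exact Matrix.map_pow_mulVec_comp _ _ _ _
  rw [horbit, range_comp]
  exact (hcomplexify.comp (IsometryEquiv.subRight p).isometry).lipschitz.isBounded_image hbdd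
end

section
/- Let K be a compact subset of ℝⁿ, M a real n×n matrix all of whose complex eigenvalues have modulus > 1, b ∈ ℝⁿ, and g(v) = Mv + b with fixed point p ∈ K. Then for every v ∈ K with v ≠ p, there exists k ≥ 1 such that gᵏ(v) ∉ K. -/
/-!
Writing `w = v - p`, the orbit satisfies `gᵏ v - p = Mᵏ w`, so if it never left the bounded
set `K` the vectors `Mᵏ w` would stay bounded. All eigenvalues of `M` lie outside the closed
unit disc, so `M` is invertible and `M⁻¹` has spectral radius `< 1`; by Gelfand's formula
`‖M⁻ᵏ‖ → 0`, and `‖w‖ = ‖M⁻ᵏ Mᵏ w‖ ≤ ‖M⁻ᵏ‖ · sup ‖Mᵏ w‖` forces `w = 0`.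
-/

open Filter Topology Bornology Set Matrix
open scoped ENNReal NNReal

theorem spectralRadius_inv_lt_one {𝕜 A : Type*} [NormedField 𝕜] [ProperSpace 𝕜] [NormedRing A]
    [NormedAlgebra 𝕜 A] [CompleteSpace A] {a : Aˣ} (ha : ∀ z ∈ spectrum 𝕜 (a : A), 1 < ‖z‖) :
    spectralRadius 𝕜 (↑a⁻¹ : A) < 1 := by
  rcases (spectrum 𝕜 (↑a⁻¹ : A)).eq_empty_or_nonempty with h | h
  · simp [spectralRadius, h]
  refine spectrum.spectralRadius_lt_of_forall_lt_of_nonempty h fun z hz => ?_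
  rw [← spectrum.map_inv] at hz
  have := ha _ hz
  rw [norm_inv, one_lt_inv_iff₀] at this
  exact_mod_cast this.2

theorem tendsto_pow_atTop_nhds_zero_of_spectralRadius_lt_one {A : Type*} [NormedRing A]
    [NormedAlgebra ℂ A] [CompleteSpace A] {a : A}
    (ha : spectralRadius ℂ a < 1) : Tendsto (fun k : ℕ => a ^ k) atTop (𝓝 0) := by
  obtain ⟨c, hac, hc1⟩ := ENNReal.lt_iff_exists_nnreal_btwn.mp ha
  have hbound : ∀ᶠ k : ℕ in atTop, ‖a ^ k‖ ≤ (c : ℝ) ^ k := by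
    filter_upwards [(spectrum.pow_nnnorm_pow_one_div_tendsto_nhds_spectralRadius a).eventually
      (gt_mem_nhds hac), eventually_ge_atTop 1] with k hk hk1
    have hk0 : (0 : ℝ) < k := by exact_mod_cast hk1
    rw [← ENNReal.coe_rpow_of_nonneg _ (one_div_pos.mpr hk0).le, ENNReal.coe_lt_coe, one_div,
      NNReal.rpow_inv_lt_iff hk0, NNReal.rpow_natCast] at hk
    exact_mod_cast hk.le
  exact squeeze_zero_norm' hbound <| tendsto_pow_atTop_nhds_zero_of_lt_one c.coe_nonneg <|
    mod_cast ENNReal.coe_lt_one_iff.mp hc1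

namespace Matrix

variable {ι : Type*} [Fintype ι] [DecidableEq ι]

theorem iterate_sub_eq_pow_mulVec_sub {R : Type*} [Ring R] {M : Matrix ι ι R} {b p : ι → R}
    {g : (ι → R) → ι → R} (hg : ∀ v, g v = M *ᵥ v + b) (hp : g p = p) (v : ι → R) (k : ℕ) :
    g^[k] v - p = M ^ k *ᵥ (v - p) := by
  induction k with
  | zero => simp
  | succ k ih =>
    calc g^[k + 1] v - p = g (g^[k] v) - g p := by rw [Function.iterate_succ_apply', hp]
      _ = M *ᵥ (g^[k] v - p) := by rw [hg, hg, mulVec_sub]; abel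
      _ = M ^ (k + 1) *ᵥ (v - p) := by rw [ih, mulVec_mulVec, pow_succ']

section LinftyOpNorm

attribute [local instance] Matrix.linftyOpNormedRing Matrix.linftyOpNormedAlgebra

theorem eq_zero_of_isBounded_pow_mulVec {A : Matrix ι ι ℂ}
    (hA : ∀ z ∈ spectrum ℂ A, 1 < ‖z‖) {x : ι → ℂ}
    (hx : IsBounded (range fun k : ℕ => A ^ k *ᵥ x)) : x = 0 := by
  obtain ⟨u, rfl⟩ : IsUnit A := spectrum.zero_notMem_iff ℂ |>.mp fun h0 =>
    (hA 0 h0).not_ge (norm_zero.trans_le zero_le_one)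
  obtain ⟨C, hC⟩ := isBounded_iff_forall_norm_le.mp hx
  have hdecay : Tendsto (fun k : ℕ => ‖(↑u⁻¹ : Matrix ι ι ℂ) ^ k‖ * C) atTop (𝓝 0) := by
    simpa using (tendsto_pow_atTop_nhds_zero_of_spectralRadius_lt_one
      (spectralRadius_inv_lt_one hA)).norm.mul_const C
  have hle (k : ℕ) : ‖x‖ ≤ ‖(↑u⁻¹ : Matrix ι ι ℂ) ^ k‖ * C :=
    calc ‖x‖ = ‖(↑u⁻¹ : Matrix ι ι ℂ) ^ k *ᵥ ((u : Matrix ι ι ℂ) ^ k *ᵥ x)‖ := by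
          rw [mulVec_mulVec, ← Units.val_pow_eq_pow_val, ← Units.val_pow_eq_pow_val,
            ← Units.val_mul, inv_pow, inv_mul_cancel, Units.val_one, one_mulVec]
      _ ≤ ‖(↑u⁻¹ : Matrix ι ι ℂ) ^ k‖ * ‖(u : Matrix ι ι ℂ) ^ k *ᵥ x‖ :=
          linfty_opNorm_mulVec _ _
      _ ≤ ‖(↑u⁻¹ : Matrix ι ι ℂ) ^ k‖ * C := by gcongr; exact hC _ ⟨k, rfl⟩
  exact norm_le_zero_iff.mp (ge_of_tendsto' hdecay hle)

end LinftyOpNorm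

theorem map_ofReal_pow_mulVec (M : Matrix ι ι ℝ) (k : ℕ) (y : ι → ℝ) :
    M.map (Complex.ofReal ·) ^ k *ᵥ (fun i => (y i : ℂ)) = fun i => ((M ^ k *ᵥ y) i : ℂ) := by
  ext i
  change (M.map Complex.ofRealHom ^ k *ᵥ (Complex.ofRealHom ∘ y)) i = _
  rw [← Matrix.map_pow, ← RingHom.map_mulVec]
  rfl

theorem eq_zero_of_isBounded_pow_mulVec_real {M : Matrix ι ι ℝ}
    (hM : ∀ z : ℂ, (M.map (Complex.ofReal ·)).charpoly.IsRoot z → 1 < ‖z‖) {y : ι → ℝ}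
    (hy : IsBounded (range fun k : ℕ => M ^ k *ᵥ y)) : y = 0 := by
  obtain ⟨C, hC⟩ := isBounded_iff_forall_norm_le.mp hy
  have hy_complex : (fun i => (y i : ℂ)) = 0 := by
    refine eq_zero_of_isBounded_pow_mulVec
      (fun z hz => hM z (mem_spectrum_iff_isRoot_charpoly.mp hz))
      (isBounded_iff_forall_norm_le.mpr ⟨C, ?_⟩)
    rintro _ ⟨k, rfl⟩
    simpa [map_ofReal_pow_mulVec, Pi.norm_def] using hC _ ⟨k, rfl⟩
  ext i
  exact Complex.ofReal_eq_zero.mp (congrFun hy_complex i)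

end Matrix

theorem expanding_affine_escapes_compact_general (n : ℕ) (K : Set (Fin n → ℝ)) (hK : IsCompact K)
    (M : Matrix (Fin n) (Fin n) ℝ)
    (hM : ∀ z : ℂ, (M.map (Complex.ofReal ·)).charpoly.IsRoot z → 1 < ‖z‖)
    (b : Fin n → ℝ) (g : (Fin n → ℝ) → (Fin n → ℝ))
    (hg : ∀ v, g v = M.mulVec v + b)
    (p : Fin n → ℝ) (hp : g p = p)
    (v : Fin n → ℝ) (hvK : v ∈ K) (hv : v ≠ p) :
    ∃ k : ℕ, 1 ≤ k ∧ g^[k] v ∉ K := by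
  by_contra! h
  have horbit (k : ℕ) : g^[k] v ∈ K := by
    rcases k.eq_zero_or_pos with rfl | hk
    · exact hvK
    · exact h k hk
  have hbdd : IsBounded (range fun k : ℕ => M ^ k *ᵥ (v - p)) := by
    refine (hK.image (continuous_sub_right p)).isBounded.subset ?_
    rintro _ ⟨k, rfl⟩
    exact ⟨_, horbit k, Matrix.iterate_sub_eq_pow_mulVec_sub hg hp v k⟩
  exact hv (sub_eq_zero.mp (Matrix.eq_zero_of_isBounded_pow_mulVec_real hM hbdd))

/-- Let `K ⊆ ℝⁿ` be compact, `M` a real `n×n` matrix all of whose complex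
eigenvalues have modulus `> 1`, and `g(v) = Mv + b` with fixed point `p ∈ K`. Then every
`v ∈ K` with `v ≠ p` has some iterate `gᵏ(v)`, `k ≥ 1`, outside `K`. -/
theorem expanding_affine_escapes_compact (n : ℕ) (K : Set (Fin n → ℝ)) (hK : IsCompact K)
    (M : Matrix (Fin n) (Fin n) ℝ)
    (hM : ∀ z : ℂ, (M.map (Complex.ofReal ·)).charpoly.IsRoot z → 1 < ‖z‖)
    (b : Fin n → ℝ) (g : (Fin n → ℝ) → (Fin n → ℝ))
    (hg : ∀ v, g v = M.mulVec v + b)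
    (p : Fin n → ℝ) (hp : g p = p) (hpK : p ∈ K)
    (v : Fin n → ℝ) (hvK : v ∈ K) (hv : v ≠ p) :
    ∃ k : ℕ, 1 ≤ k ∧ g^[k] v ∉ K :=
  expanding_affine_escapes_compact_general n K hK M hM b g hg p hp v hvK hv
end

section
/- Consider n workers with position-dependent velocities v_i : [0,1] → ℝ bounded between constants 0 < b < B, where at a fixed point of the reset function worker i+1 starts from the last position of worker i. Suppose (x̄₂,…,x̄ₙ) and (x₂*,…,xₙ*) are two fixed points of the no-station reset function. Then they are equal. (Key lemma: if the reset times satisfy T̄ > T*, then x̄ᵢ > xᵢ* for all i = 2,…,n by induction, contradicting x̄ₙ < xₙ*.) -/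
/-!
Let `τᵢ(p) = ∫₀ᵖ dt / vᵢ(t)` be the time worker `i` needs to walk from `0` to `p`; it is strictly
increasing on `[0, 1]`, and a fixed point with reset time `T` is a chain `x` with
`τᵢ(x_{i+1}) = τᵢ(xᵢ) + T`. If `T ≤ S`, the chain of time `T` stays weakly behind the chain of
time `S` going forward from the common start `0`, and weakly ahead of it going backward from the
common end `1`; hence the two chains coincide.
-/

open MeasureTheory Set

def IsRelay {n : ℕ} (τ : Fin n → ℝ → ℝ) (x : Fin (n + 1) → ℝ) (T : ℝ) : Prop :=
  ∀ i, τ i (x i.succ) = τ i (x i.castSucc) + T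

namespace IsRelay

variable {n : ℕ} {s : Set ℝ} {τ : Fin n → ℝ → ℝ} {x y : Fin (n + 1) → ℝ} {T S : ℝ}

theorem le_of_le_zero (hx : IsRelay τ x T) (hy : IsRelay τ y S)
    (hτ : ∀ i, StrictMonoOn (τ i) s) (hxs : ∀ k, x k ∈ s) (hys : ∀ k, y k ∈ s)
    (hTS : T ≤ S) (h0 : x 0 ≤ y 0) : x ≤ y := by
  intro k
  induction k using Fin.induction with
  | zero => exact h0
  | succ i ih =>
    rw [← (hτ i).le_iff_le (hxs _) (hys _), hx i, hy i]
    exact add_le_add ((hτ i).le_iff_le (hxs _) (hys _) |>.mpr ih) hTS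

theorem le_of_le_last (hx : IsRelay τ x T) (hy : IsRelay τ y S)
    (hτ : ∀ i, StrictMonoOn (τ i) s) (hxs : ∀ k, x k ∈ s) (hys : ∀ k, y k ∈ s)
    (hTS : T ≤ S) (hlast : y (Fin.last n) ≤ x (Fin.last n)) : y ≤ x := by
  intro k
  induction k using Fin.reverseInduction with
  | last => exact hlast
  | cast i ih =>
    have hτle : τ i (y i.succ) ≤ τ i (x i.succ) := (hτ i).le_iff_le (hys _) (hxs _) |>.mpr ih
    rw [← (hτ i).le_iff_le (hys _) (hxs _)]
    linarith [hx i, hy i]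

theorem eq_of_eq_zero_of_eq_last (hx : IsRelay τ x T) (hy : IsRelay τ y S)
    (hτ : ∀ i, StrictMonoOn (τ i) s) (hxs : ∀ k, x k ∈ s) (hys : ∀ k, y k ∈ s)
    (h0 : x 0 = y 0) (hlast : x (Fin.last n) = y (Fin.last n)) : x = y := by
  rcases le_total T S with hTS | hST
  · exact le_antisymm (hx.le_of_le_zero hy hτ hxs hys hTS h0.le)
      (hx.le_of_le_last hy hτ hxs hys hTS hlast.ge)
  · exact le_antisymm (hy.le_of_le_last hx hτ hys hxs hST hlast.le)
      (hy.le_of_le_zero hx hτ hys hxs hST h0.ge)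

end IsRelay

theorem integrableOn_one_div_of_le {f : ℝ → ℝ} {s : Set ℝ} {b : ℝ} (hsm : MeasurableSet s)
    (hs : volume s < ⊤) (hf : Measurable f) (hb : 0 < b) (hfb : ∀ t ∈ s, b ≤ f t) :
    IntegrableOn (fun t => 1 / f t) s := by
  refine .of_bound hs (measurable_const.div hf).aestronglyMeasurable (1 / b) ?_
  refine ae_restrict_of_forall_mem hsm fun t ht => ?_
  have hft : 0 < f t := hb.trans_le (hfb t ht)
  rw [Real.norm_of_nonneg (one_div_pos.2 hft).le]
  exact one_div_le_one_div_of_le hb (hfb t ht)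

theorem strictMonoOn_integral_of_pos {g : ℝ → ℝ} {a c : ℝ} (hg : IntegrableOn g (Icc a c))
    (hpos : ∀ t ∈ Icc a c, 0 < g t) : StrictMonoOn (fun p => ∫ t in a..p, g t) (Icc a c) := by
  intro p hp q hq hpq
  have hint {u w : ℝ} (hu : u ∈ Icc a c) (hw : w ∈ Icc a c) : IntervalIntegrable g volume u w :=
    (hg.mono_set (uIcc_subset_Icc hu hw)).intervalIntegrable
  have hleg : 0 < ∫ t in p..q, g t := intervalIntegral.intervalIntegral_pos_of_pos_on (hint hp hq)
    (fun t ht => hpos t ⟨hp.1.trans ht.1.le, ht.2.le.trans hq.2⟩) hpq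
  have ha : a ∈ Icc a c := left_mem_Icc.2 (hp.1.trans hp.2)
  show ∫ t in a..p, g t < ∫ t in a..q, g t
  rw [← intervalIntegral.integral_add_adjacent_intervals (hint ha hp) (hint hp hq)]
  linarith

theorem isRelay_integral_of_integral_eq {n : ℕ} {g : Fin n → ℝ → ℝ} {a c T : ℝ}
    {x : Fin (n + 1) → ℝ}
    (hg : ∀ i, IntegrableOn (g i) (Icc a c)) (hx : ∀ k, x k ∈ Icc a c)
    (hxT : ∀ i, ∫ t in x i.castSucc..x i.succ, g i t = T) :
    IsRelay (fun i p => ∫ t in a..p, g i t) x T := by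
  intro i
  have hint {u : ℝ} (hu : u ∈ Icc a c) : IntervalIntegrable (g i) volume a u :=
    ((hg i).mono_set (uIcc_subset_Icc (left_mem_Icc.2 (hu.1.trans hu.2)) hu)).intervalIntegrable
  rw [← hxT i]
  exact (intervalIntegral.integral_add_adjacent_intervals (hint (hx _))
    ((hint (hx _)).symm.trans (hint (hx _)))).symm

theorem no_station_fixed_point_unique_general (n : ℕ)
    (v : Fin n → ℝ → ℝ) (b B : ℝ) (hb : 0 < b)
    (hmeas : ∀ i, Measurable (v i))
    (hv : ∀ i, ∀ t ∈ Set.Icc (0 : ℝ) 1, b ≤ v i t ∧ v i t ≤ B)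
    (x y : Fin (n + 1) → ℝ)
    (hxmono : Monotone x) (hymono : Monotone y)
    (hx0 : x 0 = 0) (hxlast : x (Fin.last n) = 1)
    (hy0 : y 0 = 0) (hylast : y (Fin.last n) = 1)
    (T S : ℝ)
    (hxT : ∀ i : Fin n, ∫ t in (x i.castSucc)..(x i.succ), 1 / v i t = T)
    (hyS : ∀ i : Fin n, ∫ t in (y i.castSucc)..(y i.succ), 1 / v i t = S) :
    x = y := by
  have hint i : IntegrableOn (fun t => 1 / v i t) (Icc 0 1) :=
    integrableOn_one_div_of_le measurableSet_Icc measure_Icc_lt_top (hmeas i) hb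
      fun t ht => (hv i t ht).1
  have hτ i : StrictMonoOn (fun p => ∫ t in (0)..p, 1 / v i t) (Icc 0 1) :=
    strictMonoOn_integral_of_pos (hint i) fun t ht => one_div_pos.2 (hb.trans_le (hv i t ht).1)
  have hxI k : x k ∈ Icc 0 1 := ⟨hx0 ▸ hxmono k.zero_le, hxlast ▸ hxmono k.le_last⟩
  have hyI k : y k ∈ Icc 0 1 := ⟨hy0 ▸ hymono k.zero_le, hylast ▸ hymono k.le_last⟩
  exact (isRelay_integral_of_integral_eq hint hxI hxT).eq_of_eq_zero_of_eq_last
    (isRelay_integral_of_integral_eq hint hyI hyS) hτ hxI hyI (hx0.trans hy0.symm)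
    (hxlast.trans hylast.symm)

/-- Uniqueness of the fixed point of the no-station reset function. A fixed
point is characterized by positions `0 = x₁ ≤ x₂ ≤ ⋯ ≤ xₙ ≤ x_{n+1} = 1` such that worker `i`
travels from `xᵢ` to `x_{i+1}` at speed `vᵢ` (never blocked) in a common reset time `T`, the
travel time being `∫_{xᵢ}^{x_{i+1}} dt / vᵢ(t)`. Any two such fixed points coincide. -/
theorem no_station_fixed_point_unique (n : ℕ) (hn : 1 ≤ n)
    (v : Fin n → ℝ → ℝ) (b B : ℝ) (hb : 0 < b) (hB : b < B)
    (hmeas : ∀ i, Measurable (v i))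
    (hv : ∀ i, ∀ t ∈ Set.Icc (0 : ℝ) 1, b ≤ v i t ∧ v i t ≤ B)
    (x y : Fin (n + 1) → ℝ)
    (hxmono : Monotone x) (hymono : Monotone y)
    (hx0 : x 0 = 0) (hxlast : x (Fin.last n) = 1)
    (hy0 : y 0 = 0) (hylast : y (Fin.last n) = 1)
    (T S : ℝ)
    (hxT : ∀ i : Fin n, ∫ t in (x i.castSucc)..(x i.succ), 1 / v i t = T)
    (hyS : ∀ i : Fin n, ∫ t in (y i.castSucc)..(y i.succ), 1 / v i t = S) :
    x = y :=
  no_station_fixed_point_unique_general n v b B hb hmeas hv x y hxmono hymono hx0 hxlast hy0 hylast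
    T S hxT hyS
end

section
/- Let r1, r2 > 0 with r1 < 1 and r1 + 1 ≤ r2, and let M = ((0,-r1),(1,-r2)). Then M has a real eigenvalue λ with |λ| < 1, and there is a corresponding eigenvector direction along which the affine map g(v) = Mv + (r1, r2) is a contraction toward its fixed point p* = (r1/(r1+r2+1), (r1+r2)/(r1+r2+1)); consequently there exist infinitely many points v ≠ p* with gᵏ(v) → p* as k → ∞. -/
/-!
Translating by the fixed point `p*` turns `g` into the linear map `M`, so along an eigendirection
`u` of `M` for an eigenvalue `λ` the map acts by `p* + c • u ↦ p* + (c * λ) • u`, and its iterates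
shrink `c` geometrically when `|λ| < 1`. Such a real eigenvalue exists by the intermediate value
theorem: the characteristic polynomial `χ(x) = x² + r2 x + r1` satisfies
`χ(-r1) = r1 (r1 + 1 - r2) ≤ 0 < r1 = χ(0)`, so it has a root in `[-r1, 0]`.
-/

open Filter Polynomial Set Topology

section InvariantLine

variable {𝕜 E : Type*} [NormedField 𝕜] [AddCommGroup E] [Module 𝕜 E]
  {g : E → E} {p u : E} {lam : 𝕜}

theorem iterate_add_smul_of_map_add_smul (h : ∀ c : 𝕜, g (p + c • u) = p + (c * lam) • u)
    (k : ℕ) (c : 𝕜) : g^[k] (p + c • u) = p + (c * lam ^ k) • u := by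
  induction k generalizing c with
  | zero => simp
  | succ k ih => rw [Function.iterate_succ_apply, h, ih, mul_assoc, ← pow_succ']

theorem tendsto_iterate_add_smul_of_map_add_smul [TopologicalSpace E] [ContinuousAdd E]
    [ContinuousSMul 𝕜 E] (h : ∀ c : 𝕜, g (p + c • u) = p + (c * lam) • u) (hlam : ‖lam‖ < 1)
    (c : 𝕜) : Tendsto (fun k : ℕ => g^[k] (p + c • u)) atTop (𝓝 p) := by
  simp only [iterate_add_smul_of_map_add_smul h]
  have hcoeff : Tendsto (fun k : ℕ => c * lam ^ k) atTop (𝓝 0) := by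
    simpa using (tendsto_pow_atTop_nhds_zero_of_norm_lt_one hlam).const_mul c
  simpa using tendsto_const_nhds.add (hcoeff.smul_const u)

theorem infinite_setOf_tendsto_iterate_of_map_add_smul [Infinite 𝕜] [TopologicalSpace E]
    [ContinuousAdd E] [ContinuousSMul 𝕜 E] (h : ∀ c : 𝕜, g (p + c • u) = p + (c * lam) • u)
    (hlam : ‖lam‖ < 1) (hu : u ≠ 0) :
    {w : E | w ≠ p ∧ Tendsto (fun k : ℕ => g^[k] w) atTop (𝓝 p)}.Infinite := by
  have hinj : Function.Injective fun c : 𝕜 => p + c • u :=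
    (add_right_injective p).comp (smul_left_injective 𝕜 hu)
  refine Infinite.mono ?_ ((finite_singleton (0 : 𝕜)).infinite_compl.image hinj.injOn)
  rintro _ ⟨c, hc, rfl⟩
  exact ⟨by simpa [smul_eq_zero, hu] using hc, tendsto_iterate_add_smul_of_map_add_smul h hlam c⟩

end InvariantLine

theorem charpoly_companion (r1 r2 : ℝ) :
    (!![(0 : ℝ), -r1; 1, -r2]).charpoly = X ^ 2 + C r2 * X + C r1 := by
  rw [Matrix.charpoly, Matrix.det_fin_two]
  simp
  ring

theorem exists_quadratic_root_mem_Icc {r1 r2 : ℝ} (hr1 : 0 ≤ r1) (hr2 : r1 + 1 ≤ r2) :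
    ∃ lam ∈ Icc (-r1) 0, lam ^ 2 + r2 * lam + r1 = 0 := by
  have hcont : ContinuousOn (fun x : ℝ => x ^ 2 + r2 * x + r1) (Icc (-r1) 0) := by fun_prop
  have hzero : (0 : ℝ) ∈ Icc ((-r1) ^ 2 + r2 * -r1 + r1) (0 ^ 2 + r2 * 0 + r1) :=
    ⟨by nlinarith, by simpa using hr1⟩
  exact intermediate_value_Icc (by linarith) hcont hzero

theorem affine_map_fixedPoint_add_smul {r1 r2 lam : ℝ} (hden : r1 + r2 + 1 ≠ 0)
    (hlam : lam ^ 2 + r2 * lam + r1 = 0) (c : ℝ) :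
    let pstar : ℝ × ℝ := (r1 / (r1 + r2 + 1), (r1 + r2) / (r1 + r2 + 1))
    let q := pstar + c • ((lam + r2, 1) : ℝ × ℝ)
    ((-r1 * q.2 + r1, q.1 - r2 * q.2 + r2) : ℝ × ℝ) = pstar + (c * lam) • (lam + r2, 1) := by
  simp only [Prod.smul_mk, smul_eq_mul, Prod.mk_add_mk, Prod.ext_iff]
  constructor
  · field_simp
    linear_combination (-c * (r1 + r2 + 1)) * hlam
  · field_simp
    ring

/-- For `0 < r1 < 1` and `r1 + 1 ≤ r2`, the matrix `M = ((0,-r1),(1,-r2))` has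
a real eigenvalue `λ` with `|λ| < 1`, along whose eigendirection the affine map
`g(v) = Mv + (r1,r2)` contracts toward its fixed point `p* = (r1/(r1+r2+1), (r1+r2)/(r1+r2+1))`;
consequently there are infinitely many points `v ≠ p*` with `gᵏ(v) → p*`. -/
theorem region2_stable_direction (r1 r2 : ℝ) (hr1pos : 0 < r1) (hr1 : r1 < 1)
    (hr2 : r1 + 1 ≤ r2)
    (g : ℝ × ℝ → ℝ × ℝ)
    (hg : ∀ p : ℝ × ℝ, g p = (-r1 * p.2 + r1, p.1 - r2 * p.2 + r2))
    (pstar : ℝ × ℝ) (hpstar : pstar = (r1 / (r1 + r2 + 1), (r1 + r2) / (r1 + r2 + 1))) :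
    ∃ lam : ℝ, |lam| < 1 ∧
      (!![(0 : ℝ), -r1; 1, -r2]).charpoly.IsRoot lam ∧
      ∃ u : ℝ × ℝ, u ≠ 0 ∧
        (∀ c : ℝ, g (pstar + c • u) = pstar + (c * lam) • u) ∧
        {w : ℝ × ℝ | w ≠ pstar ∧
          Tendsto (fun k : ℕ => g^[k] w) atTop (nhds pstar)}.Infinite := by
  obtain ⟨lam, ⟨hlam_ge, hlam_le⟩, hroot⟩ := exists_quadratic_root_mem_Icc hr1pos.le hr2
  have habs : |lam| < 1 := abs_lt.2 ⟨by linarith, by linarith⟩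
  have hline : ∀ c : ℝ, g (pstar + c • ((lam + r2, 1) : ℝ × ℝ)) =
      pstar + (c * lam) • ((lam + r2, 1) : ℝ × ℝ) := fun c => by
    rw [hg, hpstar]
    exact affine_map_fixedPoint_add_smul (by linarith) hroot c
  have hu : ((lam + r2, 1) : ℝ × ℝ) ≠ 0 := by simp [Prod.ext_iff]
  refine ⟨lam, habs, ?_, _, hu, hline, ?_⟩
  · simpa [charpoly_companion] using hroot
  · exact infinite_setOf_tendsto_iterate_of_map_add_smul hline (by rwa [Real.norm_eq_abs]) hu
end

section
/- Let r1 > r2 ≥ 1 with r2 ≥ 1 and let f be the three-worker reset map. For every (x,y) ∈ △ not equal to the fixed point p* = (r1/(r1+r2+1), (r1+r2)/(r1+r2+1)), there exists k ≥ 0 such that fᵏ(x,y) has first coordinate 0 (i.e., the orbit reaches a point of the form (0,y')). -/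
/-!
Off the affine branch `(x, y) ↦ (r1 (1 - y), x + r2 (1 - y))`, the reset map sends the simplex
into its edges `y = 1` or `x = y`, from which the orbit reaches the axis `x = 0` within two more
steps. An orbit that stays on the affine branch forever has second coordinates whose deviations
`v k` from the fixed point solve `v (k+2) + r2 v (k+1) + r1 v k = 0`. The quadratic form
`v (k+1)² + r2 v k v (k+1) + r1 (v k)²` is multiplied by `r1 > 1` at each step, so boundedness
forces it to vanish; then `r1 |v k| ≤ r2 |v (k+1)|`, and boundedness again forces `v = 0`, i.e.
the orbit sits at the fixed point.
-/

open Set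

theorem eq_zero_of_growth_of_bounded {E : Type*} [NormedAddGroup E] {u : ℕ → E} {ρ C : ℝ}
    (hρ : 1 < ρ) (hgrow : ∀ k, ρ * ‖u k‖ ≤ ‖u (k + 1)‖) (hbdd : ∀ k, ‖u k‖ ≤ C) (n : ℕ) :
    u n = 0 := by
  have hpow : ∀ k, ρ ^ k * ‖u n‖ ≤ ‖u (n + k)‖ := by
    intro k
    induction k with
    | zero => simp
    | succ k ih =>
      calc ρ ^ (k + 1) * ‖u n‖ = ρ * (ρ ^ k * ‖u n‖) := by ring
        _ ≤ ρ * ‖u (n + k)‖ := by gcongr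
        _ ≤ ‖u (n + (k + 1))‖ := hgrow (n + k)
  by_contra hne
  have hpos : 0 < ‖u n‖ := norm_pos_iff.mpr hne
  obtain ⟨k, hk⟩ := pow_unbounded_of_one_lt (C / ‖u n‖) hρ
  rw [div_lt_iff₀ hpos] at hk
  linarith [hpow k, hbdd (n + k)]

theorem mul_abs_le_of_sq_add_mul_add_eq_zero {b c s t : ℝ} (hb : 0 ≤ b)
    (h : t ^ 2 + b * s * t + c * s ^ 2 = 0) : c * |s| ≤ b * |t| := by
  rcases (abs_nonneg s).eq_or_lt with hs | hs
  · rw [← hs, mul_zero]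
    positivity
  · have hst : -(b * (s * t)) ≤ b * (|s| * |t|) := by
      rw [← abs_mul, ← mul_neg]
      exact mul_le_mul_of_nonneg_left (neg_le_abs _) hb
    refine le_of_mul_le_mul_left ?_ hs
    calc |s| * (c * |s|) = c * s ^ 2 := by rw [mul_left_comm, abs_mul_abs_self, sq]
      _ = -t ^ 2 - b * (s * t) := by linarith
      _ ≤ -(b * (s * t)) := by linarith [sq_nonneg t]
      _ ≤ b * (|s| * |t|) := hst
      _ = |s| * (b * |t|) := by ring

theorem eq_zero_of_bounded_of_recurrence {b c C : ℝ} (hb : 0 < b) (hbc : b < c) (hc : 1 < c)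
    {v : ℕ → ℝ} (hrec : ∀ k, v (k + 2) + b * v (k + 1) + c * v k = 0)
    (hbdd : ∀ k, |v k| ≤ C) (n : ℕ) : v n = 0 := by
  set Q : ℕ → ℝ := fun k => v (k + 1) ^ 2 + b * v k * v (k + 1) + c * v k ^ 2 with hQ
  have hQ_succ : ∀ k, Q (k + 1) = c * Q k := fun k => by
    simp only [hQ]
    linear_combination (v (k + 2) - c * v k) * hrec k
  have hC : 0 ≤ C := (abs_nonneg _).trans (hbdd 0)
  have hQ_bdd : ∀ k, ‖Q k‖ ≤ C ^ 2 + b * C * C + c * C ^ 2 := fun k =>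
    calc ‖Q k‖ ≤ |v (k + 1) ^ 2| + |b * v k * v (k + 1)| + |c * v k ^ 2| := abs_add_three _ _ _
      _ = |v (k + 1)| ^ 2 + b * |v k| * |v (k + 1)| + c * |v k| ^ 2 := by
        simp only [abs_mul, abs_pow, abs_of_pos hb, abs_of_pos (hb.trans hbc)]
      _ ≤ C ^ 2 + b * C * C + c * C ^ 2 := by gcongr <;> exact hbdd _
  have hQ_zero : ∀ k, Q k = 0 := eq_zero_of_growth_of_bounded hc
    (fun k => by rw [hQ_succ, norm_mul, Real.norm_of_nonneg (zero_le_one.trans hc.le)]) hQ_bdd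
  have hgrow : ∀ k, c / b * ‖v k‖ ≤ ‖v (k + 1)‖ := fun k => by
    rw [Real.norm_eq_abs, Real.norm_eq_abs, div_mul_eq_mul_div, div_le_iff₀' hb]
    exact mul_abs_le_of_sq_add_mul_add_eq_zero hb.le (hQ_zero k)
  exact eq_zero_of_growth_of_bounded ((one_lt_div hb).mpr hbc) hgrow hbdd n

namespace BucketBrigade

def simplex : Set (ℝ × ℝ) := {p | 0 ≤ p.1 ∧ p.1 ≤ p.2 ∧ p.2 ≤ 1}

def affineBranch (r1 r2 : ℝ) (p : ℝ × ℝ) : ℝ × ℝ := (r1 * (1 - p.2), p.1 + r2 * (1 - p.2))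

noncomputable def fixedPoint (r1 r2 : ℝ) : ℝ × ℝ :=
  (r1 / (r1 + r2 + 1), (r1 + r2) / (r1 + r2 + 1))

variable {r1 r2 : ℝ}

theorem resetMap_mapsTo_simplex (hr1 : 0 ≤ r1) (hr2 : 0 ≤ r2) :
    MapsTo (resetMap r1 r2) simplex simplex := by
  rintro ⟨x, y⟩ ⟨hx, hxy, hy⟩
  have hy' : 0 ≤ 1 - y := by linarith
  unfold resetMap
  split_ifs with h1 h2 h3
  · norm_num [simplex]
  · exact ⟨by positivity, by linarith [h2.1], le_rfl⟩
  · exact ⟨by positivity, le_rfl, by linarith [h3.trans_le (min_le_left _ _)]⟩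
  · dsimp only at *
    push Not at h1 h2 h3
    have ha : x + (1 - y) * r2 < 1 := by
      by_contra! ha
      have hb : 1 ≤ (1 - y) * r1 := by
        by_contra! hb
        linarith [h2 hb]
      exact h1.not_ge (le_min ha hb)
    have hb : (1 - y) * r1 ≤ x + (1 - y) * r2 :=
      (min_le_iff.mp h3).resolve_left ha.not_ge
    exact ⟨by positivity, by linarith, by linarith⟩

theorem resetMap_eq_affineBranch_or (p : ℝ × ℝ) :
    resetMap r1 r2 p = affineBranch r1 r2 p ∨ (resetMap r1 r2 p).2 = 1 ∨
      (resetMap r1 r2 p).1 = (resetMap r1 r2 p).2 := by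
  unfold resetMap
  split_ifs <;> simp [affineBranch]

theorem fst_resetMap_eq_zero_of_snd_eq_one {p : ℝ × ℝ} (hp : 0 ≤ p.1) (h : p.2 = 1) :
    (resetMap r1 r2 p).1 = 0 := by
  unfold resetMap
  split_ifs with h1 h2 h3 <;> simp only [h, sub_self, zero_mul, mul_zero, add_zero] at *
  · norm_num at h1
  · rw [lt_min_iff] at h3
    linarith [h3.2]

theorem snd_resetMap_eq_one_of_fst_eq_snd (hr2 : 1 ≤ r2) {p : ℝ × ℝ} (hp : p.2 ≤ 1)
    (h : p.1 = p.2) : (resetMap r1 r2 p).2 = 1 := by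
  have hge : 1 ≤ p.1 + (1 - p.2) * r2 := by nlinarith
  unfold resetMap
  split_ifs with h1 h2 h3
  · rfl
  · rfl
  · linarith [h3.trans_le (min_le_left _ _)]
  · exact absurd ⟨lt_of_not_ge fun h' => h1 (le_min hge h'), hge⟩ h2

theorem exists_iterate_fst_eq_zero_of_ne_affineBranch (hr1 : 0 ≤ r1) (hr2 : 1 ≤ r2)
    {p : ℝ × ℝ} (hp : p ∈ simplex) (h : resetMap r1 r2 p ≠ affineBranch r1 r2 p) :
    ∃ j, ((resetMap r1 r2)^[j] p).1 = 0 := by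
  have hmaps := resetMap_mapsTo_simplex hr1 (zero_le_one.trans hr2)
  have hq := hmaps hp
  rcases (resetMap_eq_affineBranch_or p).resolve_left h with hedge | hdiag
  · exact ⟨2, fst_resetMap_eq_zero_of_snd_eq_one hq.1 hedge⟩
  · exact ⟨3, fst_resetMap_eq_zero_of_snd_eq_one (hmaps hq).1
      (snd_resetMap_eq_one_of_fst_eq_snd hr2 hq.2.2 hdiag)⟩

theorem eq_fixedPoint_of_affineBranch_orbit (hr2 : 0 < r2) (hr21 : r2 < r1) (hr1 : 1 < r1)
    {p : ℕ → ℝ × ℝ} (hp : ∀ k, p (k + 1) = affineBranch r1 r2 (p k))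
    (hbdd : ∀ k, (p k).2 ∈ Icc (0 : ℝ) 1) : p 0 = fixedPoint r1 r2 := by
  have hS : 0 < r1 + r2 + 1 := by linarith
  set ystar := (r1 + r2) / (r1 + r2 + 1) with hystar
  have hystar_mem : ystar ∈ Icc (0 : ℝ) 1 :=
    ⟨by positivity, (div_le_one hS).mpr (by linarith)⟩
  have hv : ∀ n, (p n).2 - ystar = 0 := by
    refine eq_zero_of_bounded_of_recurrence hr2 hr21 hr1 (fun k => ?_) (C := 1) (fun k => ?_)
    · simp only [hp, affineBranch, hystar]
      field_simp
      ring
    · rw [abs_le]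
      constructor <;> linarith [(hbdd k).1, (hbdd k).2, hystar_mem.1, hystar_mem.2]
  have hy0 : (p 0).2 = ystar := sub_eq_zero.mp (hv 0)
  have hx0 : (p 0).1 = ystar - r2 * (1 - ystar) := by
    have hy1 := hv 1
    simp only [hp, affineBranch, hy0] at hy1
    linarith
  refine Prod.ext ?_ hy0
  rw [hx0, fixedPoint, hystar]
  field_simp
  ring

end BucketBrigade

open BucketBrigade in
/-- For `r1 > r2 ≥ 1`, every point of the simplex other than the fixed point
`p* = (r1/(r1+r2+1), (r1+r2)/(r1+r2+1))` has an iterate under the reset map whose first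
coordinate is `0`. -/
theorem orbit_reaches_axis (r1 r2 : ℝ) (hr2 : 1 ≤ r2) (hr21 : r2 < r1)
    (x y : ℝ) (hxy : 0 ≤ x ∧ x ≤ y ∧ y ≤ 1)
    (hne : (x, y) ≠ (r1 / (r1 + r2 + 1), (r1 + r2) / (r1 + r2 + 1))) :
    ∃ k : ℕ, ((resetMap r1 r2)^[k] (x, y)).1 = 0 := by
  have hr1 : 1 < r1 := hr2.trans_lt hr21
  by_contra! hnone
  set f := resetMap r1 r2
  have hsimplex : ∀ k, f^[k] (x, y) ∈ simplex := fun k =>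
    (resetMap_mapsTo_simplex (by linarith) (by linarith)).iterate k hxy
  have haffine : ∀ k, f^[k + 1] (x, y) = affineBranch r1 r2 (f^[k] (x, y)) := by
    intro k
    rw [Function.iterate_succ_apply']
    by_contra hk
    obtain ⟨j, hj⟩ := exists_iterate_fst_eq_zero_of_ne_affineBranch (zero_le_one.trans hr1.le) hr2
      (hsimplex k) hk
    exact hnone (j + k) (by rwa [Function.iterate_add_apply])
  exact hne (eq_fixedPoint_of_affineBranch_orbit (by linarith) hr21 hr1 haffine fun k =>
    ⟨(hsimplex k).1.trans (hsimplex k).2.1, (hsimplex k).2.2⟩)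
end
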